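/- Let H_f be a complex Hilbert space, C₀ : H_f → H_f a conjugate-linear isometric involution, and π : ℝ³ → B(H_f) a norm-continuous family of orthogonal projections. Let H := L²(ℝ³, H_f) with respect to Lebesgue measure, and suppose P̂ : H → H and C_Z : H → H are maps such that for every Ψ ∈ H, P̂Ψ is represented almost everywhere by k ↦ π(k)(Ψ(k)) and C_ZΨ is represented almost everywhere by k ↦ C₀(Ψ(−k)). Then C_Z(P̂(C_Z Ψ)) = P̂ Ψ for all Ψ ∈ H if and only if C₀ ∘ π(k) ∘ C₀ = π(−k) for all k ∈ ℝ³. (Abstract form of the paper's Proposition 4.4: the range of the fibered spectral projection supports real states if and only if the fiber projections satisfy C π₀(k) C = π₀(−k).) -/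
import Mathlib


open MeasureTheory

/-- Abstract form of Proposition 4.4: for a norm-continuous family of orthogonal
projections `π(k)` on a fiber Hilbert space, the fibered projection `P̂` on
`L²(ℝ³, H_f)` commutes with the conjugation `(C_Z Ψ)(k) = C₀(Ψ(−k))` if and only if
the fibers satisfy `C₀ π(k) C₀ = π(−k)` for all `k`. -/
theorem fibered_projection_commutes_conjugation_iff
    {Hf : Type*} [NormedAddCommGroup Hf] [InnerProductSpace ℂ Hf] [CompleteSpace Hf]
    (C₀ : Hf → Hf)
    (hadd : ∀ x y : Hf, C₀ (x + y) = C₀ x + C₀ y)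
    (hsmul : ∀ (a : ℂ) (v : Hf), C₀ (a • v) = (starRingEnd ℂ) a • C₀ v)
    (hnorm : ∀ v : Hf, ‖C₀ v‖ = ‖v‖)
    (hinv : ∀ v : Hf, C₀ (C₀ v) = v)
    (π : (Fin 3 → ℝ) → (Hf →L[ℂ] Hf))
    (hcont : Continuous π)
    (hsa : ∀ k, IsSelfAdjoint (π k))
    (hidem : ∀ k, π k ∘L π k = π k)
    (P CZ : Lp Hf 2 (volume : Measure (Fin 3 → ℝ)) →
              Lp Hf 2 (volume : Measure (Fin 3 → ℝ)))
    (hP : ∀ Ψ, ∀ᵐ k ∂(volume : Measure (Fin 3 → ℝ)), (P Ψ) k = π k (Ψ k))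
    (hCZ : ∀ Ψ, ∀ᵐ k ∂(volume : Measure (Fin 3 → ℝ)), (CZ Ψ) k = C₀ (Ψ (-k))) :
    (∀ Ψ, CZ (P (CZ Ψ)) = P Ψ) ↔
      ∀ (k : Fin 3 → ℝ) (v : Hf), C₀ (π k (C₀ v)) = π (-k) v := by
  classical
  -- C₀ is continuous
  have hC0zero : C₀ 0 = 0 := by
    have h := hadd 0 0
    simp only [add_zero] at h
    exact left_eq_add.mp h
  have hCneg : ∀ x : Hf, C₀ (-x) = -C₀ x := by
    intro x
    have h := hsmul (-1) x
    simpa using h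
  have hCsub : ∀ x y : Hf, C₀ (x - y) = C₀ x - C₀ y := by
    intro x y
    rw [sub_eq_add_neg, hadd, hCneg, sub_eq_add_neg]
  have hC0cont : Continuous C₀ := by
    have : Isometry C₀ := Isometry.of_dist_eq fun x y => by
      rw [dist_eq_norm, dist_eq_norm, ← hCsub, hnorm]
    exact this.continuous
  -- negation is measure preserving
  have hnegMP : MeasurePreserving (fun k : Fin 3 → ℝ => -k)
      (volume : Measure (Fin 3 → ℝ)) volume := Measure.measurePreserving_neg _
  have aeneg : ∀ {p : (Fin 3 → ℝ) → Prop},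
      (∀ᵐ k ∂(volume : Measure (Fin 3 → ℝ)), p k) →
      (∀ᵐ k ∂(volume : Measure (Fin 3 → ℝ)), p (-k)) := fun h =>
    hnegMP.quasiMeasurePreserving.ae h
  -- key pointwise identity extracted from the commutation relation
  have key : ∀ Ψ, CZ (P (CZ Ψ)) = P Ψ →
      ∀ᵐ k ∂(volume : Measure (Fin 3 → ℝ)),
        C₀ (π (-k) (C₀ (Ψ k))) = π k (Ψ k) := by
    intro Ψ hcm
    have h1 := hCZ (P (CZ Ψ))
    have h2 := aeneg (hP (CZ Ψ))
    have h3 := aeneg (hCZ Ψ)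
    have h4 := hP Ψ
    filter_upwards [h1, h2, h3, h4] with k e1 e2 e3 e4
    have : ((P Ψ : Lp Hf 2 (volume : Measure (Fin 3 → ℝ))) : _ → Hf) k
        = C₀ (π (-k) (C₀ (Ψ k))) := by
      rw [← hcm, e1, e2, e3, neg_neg]
    rw [e4] at this
    exact this.symm
  constructor
  · intro hcm k v
    -- a.e. identity for the constant vector v, via indicators of balls
    have hae : ∀ᵐ x ∂(volume : Measure (Fin 3 → ℝ)), C₀ (π (-x) (C₀ v)) = π x v := by
      have hall : ∀ᵐ x ∂(volume : Measure (Fin 3 → ℝ)),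
          ∀ n : ℕ, x ∈ Metric.ball (0 : Fin 3 → ℝ) n →
            C₀ (π (-x) (C₀ v)) = π x v := by
        rw [ae_all_iff]
        intro n
        set Ψ : Lp Hf 2 (volume : Measure (Fin 3 → ℝ)) :=
          indicatorConstLp 2 (measurableSet_ball (x := (0 : Fin 3 → ℝ)) (ε := (n : ℝ)))
            measure_ball_lt_top.ne v with hΨdef
        have h1 := key Ψ (hcm Ψ)
        have h2 := indicatorConstLp_coeFn (μ := (volume : Measure (Fin 3 → ℝ)))
          (p := 2) (hs := measurableSet_ball (x := (0 : Fin 3 → ℝ)) (ε := (n : ℝ)))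
          (hμs := measure_ball_lt_top.ne) (c := v)
        filter_upwards [h1, h2] with x hx1 hx2 hxball
        rw [hx2] at hx1
        simpa [Set.indicator_of_mem hxball] using hx1
      filter_upwards [hall] with x hx
      obtain ⟨n, hn⟩ := exists_nat_gt ‖x‖
      exact hx n (by simpa [Metric.mem_ball, dist_eq_norm] using hn)
    -- both sides are continuous, hence equal everywhere
    have hc1 : Continuous fun x : Fin 3 → ℝ => C₀ (π (-x) (C₀ v)) :=
      hC0cont.comp ((hcont.comp continuous_neg).clm_apply continuous_const)
    have hc2 : Continuous fun x : Fin 3 → ℝ => π x v :=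
      hcont.clm_apply continuous_const
    have hfun := (Continuous.ae_eq_iff_eq (volume : Measure (Fin 3 → ℝ)) hc1 hc2).mp hae
    have := congrFun hfun (-k)
    simpa using this
  · intro hfiber Ψ
    apply Lp.ext
    have h1 := hCZ (P (CZ Ψ))
    have h2 := aeneg (hP (CZ Ψ))
    have h3 := aeneg (hCZ Ψ)
    have h4 := hP Ψ
    filter_upwards [h1, h2, h3, h4] with k e1 e2 e3 e4
    rw [e1, e2, e3, neg_neg, e4]
    have := hfiber (-k) (Ψ k)
    simpa using this
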